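/- arXiv:1302.6055 — 2 statements merged into one kernel-verified Lean document; each statement's English description precedes it below -/
import Mathlib

section
/- Let k ≥ 2 be an integer and let (f,g) with f,g ∈ C₀⁺[0,1] satisfy (H_k f)(t) = g(t) and (H_k g)(t) = f(t) for all t ∈ [0,1], with f ≠ g. Then the function φ(t) = f(t) − g(t) changes its sign on [0,1]: there exist t₁, t₂ ∈ [0,1] with φ(t₁) > 0 and φ(t₂) < 0. -/
open Set MeasureTheory

/-- The Hammerstein operator `(H_k f)(t) = ∫₀¹ K(t,u) f(u)^k du`. -/
noncomputable def Hk (K : ℝ → ℝ → ℝ) (k : ℕ) (f : ℝ → ℝ) (t : ℝ) : ℝ :=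
  ∫ u in (0:ℝ)..1, K t u * f u ^ k

lemma Hk_mono (K : ℝ → ℝ → ℝ) (k : ℕ)
    (hKcont : ContinuousOn (fun p : ℝ × ℝ => K p.1 p.2) (Icc 0 1 ×ˢ Icc 0 1))
    (hKpos : ∀ t ∈ Icc (0:ℝ) 1, ∀ u ∈ Icc (0:ℝ) 1, 0 < K t u)
    (f g : ℝ → ℝ)
    (hf : ContinuousOn f (Icc 0 1)) (hg : ContinuousOn g (Icc 0 1))
    (hgnonneg : ∀ t ∈ Icc (0:ℝ) 1, 0 ≤ g t)
    (hle : ∀ t ∈ Icc (0:ℝ) 1, g t ≤ f t) :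
    ∀ t ∈ Icc (0:ℝ) 1, Hk K k g t ≤ Hk K k f t := by
  intro t ht
  have hKt : ContinuousOn (fun u => K t u) (Icc 0 1) := by
    have : ContinuousOn (fun u : ℝ => (t, u)) (Icc 0 1) :=
      (Continuous.prodMk_right t).continuousOn
    exact hKcont.comp this (fun u hu => ⟨ht, hu⟩)
  have huIcc : uIcc (0:ℝ) 1 = Icc 0 1 := uIcc_of_le (by norm_num)
  have hintf : IntervalIntegrable (fun u => K t u * f u ^ k) volume 0 1 := by
    apply ContinuousOn.intervalIntegrable
    rw [huIcc]; exact hKt.mul (hf.pow k)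
  have hintg : IntervalIntegrable (fun u => K t u * g u ^ k) volume 0 1 := by
    apply ContinuousOn.intervalIntegrable
    rw [huIcc]; exact hKt.mul (hg.pow k)
  exact intervalIntegral.integral_mono_on (by norm_num) hintg hintf
    (fun u hu => mul_le_mul_of_nonneg_left
      (pow_le_pow_left₀ (hgnonneg u hu) (hle u hu) k) (hKpos t ht u hu).le)

theorem stmt_7
    (K : ℝ → ℝ → ℝ) (k : ℕ) (hk : 2 ≤ k)
    (hKcont : ContinuousOn (fun p : ℝ × ℝ => K p.1 p.2) (Icc 0 1 ×ˢ Icc 0 1))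
    (hKpos : ∀ t ∈ Icc (0:ℝ) 1, ∀ u ∈ Icc (0:ℝ) 1, 0 < K t u)
    (f g : ℝ → ℝ)
    (hf : ContinuousOn f (Icc 0 1)) (hg : ContinuousOn g (Icc 0 1))
    (hfnonneg : ∀ t ∈ Icc (0:ℝ) 1, 0 ≤ f t)
    (hgnonneg : ∀ t ∈ Icc (0:ℝ) 1, 0 ≤ g t)
    (hfne : ∃ t ∈ Icc (0:ℝ) 1, f t ≠ 0)
    (hgne : ∃ t ∈ Icc (0:ℝ) 1, g t ≠ 0)
    (heq1 : ∀ t ∈ Icc (0:ℝ) 1, Hk K k f t = g t)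
    (heq2 : ∀ t ∈ Icc (0:ℝ) 1, Hk K k g t = f t)
    (hne : ∃ t ∈ Icc (0:ℝ) 1, f t ≠ g t) :
    (∃ t₁ ∈ Icc (0:ℝ) 1, 0 < f t₁ - g t₁) ∧
    (∃ t₂ ∈ Icc (0:ℝ) 1, f t₂ - g t₂ < 0) := by
  obtain ⟨t0, ht0, hne0⟩ := hne
  constructor
  · by_contra h
    push_neg at h
    -- f ≤ g on Icc
    have hle : ∀ t ∈ Icc (0:ℝ) 1, f t ≤ g t := fun t ht => by
      have := h t ht; linarith
    have := Hk_mono K k hKcont hKpos g f hg hf hfnonneg hle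
    -- Hk f ≤ Hk g, i.e. g ≤ f
    exact hne0 (le_antisymm (hle t0 ht0)
      (by have h1 := this t0 ht0; rw [heq1 t0 ht0, heq2 t0 ht0] at h1; exact h1))
  · by_contra h
    push_neg at h
    have hle : ∀ t ∈ Icc (0:ℝ) 1, g t ≤ f t := fun t ht => by
      have := h t ht; linarith
    have := Hk_mono K k hKcont hKpos f g hf hg hgnonneg hle
    exact hne0 (le_antisymm
      (by have h1 := this t0 ht0; rw [heq1 t0 ht0, heq2 t0 ht0] at h1; exact h1)
      (hle t0 ht0))
end

section
/- There exists an odd n₀ ∈ ℕ such that for every odd n ≥ n₀ and all t, u ∈ [0,1], K_n(t,u) > 0. -/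
open Set MeasureTheory Filter

/-- For odd `n`, the real `n`-th root of `x` (the unique `y` with `y^n = x`). -/
noncomputable def oddRoot (n : ℕ) (x : ℝ) : ℝ :=
  if 0 ≤ x then x ^ ((n:ℝ)⁻¹) else -((-x) ^ ((n:ℝ)⁻¹))

/-- `b_n = (1/ⁿ√4)^(n-1) · (1 + 2/n)`. -/
noncomputable def bseq (n : ℕ) : ℝ :=
  (1 / oddRoot n 4) ^ (n - 1) * (1 + 2 / (n : ℝ))

/-- `c_n > 0` is defined by `c_n³ = (1/2)·∫_{-1/2}^{1/2} du/(2 + ⁿ√u)²`. -/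
noncomputable def cseq (n : ℕ) : ℝ :=
  ((1 / 2) * ∫ u in (-(1/2) : ℝ)..(1/2), 1 / (2 + oddRoot n u) ^ 2) ^ ((3:ℝ)⁻¹)

/-- The kernel `K_n(t,u)`. -/
noncomputable def Kn (n : ℕ) (t u : ℝ) : ℝ :=
  (1 - bseq n * (cseq n) ^ 3 * oddRoot n (u - 1/2) *
      (oddRoot n ((u - 1/2) ^ 2) - 4) ^ 2 * oddRoot n (t - 1/2)) /
    ((cseq n) ^ 2 * (oddRoot n (u - 1/2) + 2) ^ 2)

/-!
Write `x = ⁿ√(u - 1/2)` and `y = ⁿ√(t - 1/2)`, both in `[-1, 1]`. The denominator of `K_n` is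
positive because `x + 2 ≥ 1`, and since `ⁿ√((u - 1/2)²) = x²`, the numerator is
`1 - b_n c_n³ · x (x² - 4)² · y`. On `[-1, 1]` we have `|x (x² - 4)²| ≤ 10`, while
`b_n = ⁿ√4 (1 + 2/n) / 4 ≤ (1 + 3/n)(1 + 2/n) / 4` by Bernoulli's inequality and
`c_n³ ≤ (1/2)(1/2 · 1 + 1/2 · 1/4) = 5/16` by bounding the integrand on each half of the interval.
For `n ≥ 21` this makes `b_n c_n³ · 10 < 1`.
-/

section oddRoot

variable {n : ℕ} {x : ℝ}

theorem oddRoot_of_nonneg (hx : 0 ≤ x) : oddRoot n x = x ^ (n:ℝ)⁻¹ := if_pos hx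

theorem oddRoot_nonneg (hx : 0 ≤ x) : 0 ≤ oddRoot n x := by
  rw [oddRoot_of_nonneg hx]; positivity

theorem abs_oddRoot (n : ℕ) (x : ℝ) : |oddRoot n x| = |x| ^ (n:ℝ)⁻¹ := by
  unfold oddRoot
  split_ifs with hx
  · rw [Real.abs_rpow_of_nonneg hx]
  · rw [abs_neg, Real.abs_rpow_of_nonneg (by linarith), abs_neg]

theorem abs_oddRoot_le_one (hx : |x| ≤ 1) : |oddRoot n x| ≤ 1 := by
  rw [abs_oddRoot]
  exact Real.rpow_le_one (abs_nonneg x) hx (by positivity)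

theorem oddRoot_sq (n : ℕ) (x : ℝ) : oddRoot n (x ^ 2) = oddRoot n x ^ 2 := by
  rw [← sq_abs (oddRoot n x), abs_oddRoot, Real.rpow_pow_comm (abs_nonneg x), sq_abs,
    oddRoot_of_nonneg (sq_nonneg x)]

theorem oddRoot_pow (hn : n ≠ 0) (hx : 0 ≤ x) : oddRoot n x ^ n = x := by
  rw [oddRoot_of_nonneg hx, Real.rpow_inv_natCast_pow hx hn]

theorem continuous_oddRoot (hn : n ≠ 0) : Continuous (oddRoot n) := by
  have hroot : Continuous fun x : ℝ => x ^ (n:ℝ)⁻¹ := Real.continuous_rpow_const (by positivity)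
  refine Continuous.if_le hroot (hroot.comp continuous_neg).neg continuous_const continuous_id ?_
  rintro x rfl
  simp [Real.zero_rpow (inv_ne_zero (Nat.cast_ne_zero.mpr hn))]

theorem neg_one_le_oddRoot (hx : -1 ≤ x) : -1 ≤ oddRoot n x := by
  rcases le_total 0 x with h | h
  · linarith [oddRoot_nonneg (n := n) h]
  · exact (abs_le.mp (abs_oddRoot_le_one (abs_le.mpr ⟨hx, by linarith⟩))).1

theorem oddRoot_four_le (hn : n ≠ 0) : oddRoot n 4 ≤ 1 + 3 / n := by
  have hn' : (0:ℝ) < n := by positivity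
  have hbernoulli : (4:ℝ) ≤ (1 + 3 / n) ^ n := by
    have := one_add_mul_le_pow (by linarith [(by positivity : (0:ℝ) ≤ 3 / n)] : (-2:ℝ) ≤ 3 / n) n
    rwa [mul_div_cancel₀ _ hn'.ne', show (1:ℝ) + 3 = 4 by norm_num] at this
  calc oddRoot n 4 = (4:ℝ) ^ (n:ℝ)⁻¹ := oddRoot_of_nonneg (by norm_num)
    _ ≤ ((1 + 3 / n) ^ n) ^ (n:ℝ)⁻¹ := by gcongr
    _ = 1 + 3 / n := Real.pow_rpow_inv_natCast (by positivity) hn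

end oddRoot

theorem bseq_eq {n : ℕ} (hn : n ≠ 0) : bseq n = oddRoot n 4 / 4 * (1 + 2 / n) := by
  have hr : 0 < oddRoot n 4 := by
    rw [oddRoot_of_nonneg (by norm_num)]; positivity
  obtain ⟨m, rfl⟩ := Nat.exists_eq_add_one_of_ne_zero hn
  have hinv : (1 / oddRoot (m + 1) 4) ^ m = oddRoot (m + 1) 4 / oddRoot (m + 1) 4 ^ (m + 1) := by
    rw [one_div_pow, pow_succ]; field_simp
  rw [bseq, Nat.add_sub_cancel, hinv, oddRoot_pow hn (by norm_num)]

theorem bseq_le {n : ℕ} (hn : n ≠ 0) : bseq n ≤ (1 + 3 / n) * (1 + 2 / n) / 4 := by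
  rw [bseq_eq hn, div_mul_eq_mul_div]
  gcongr
  exact oddRoot_four_le hn

theorem bseq_nonneg (n : ℕ) : 0 ≤ bseq n := by
  rw [bseq, oddRoot_of_nonneg (by norm_num)]; positivity

section cseq

variable {n : ℕ}

theorem intervalIntegrable_inv_two_add_oddRoot_sq (hn : n ≠ 0) {a b : ℝ} (ha : -1 ≤ a)
    (hb : -1 ≤ b) : IntervalIntegrable (fun u => 1 / (2 + oddRoot n u) ^ 2) volume a b := by
  refine ContinuousOn.intervalIntegrable (continuousOn_const.div
    ((continuous_const.add (continuous_oddRoot hn)).pow 2).continuousOn fun u hu => ?_)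
  have hu : -1 ≤ u := by
    rcases Set.mem_uIcc.mp hu with h | h <;> linarith [h.1]
  nlinarith [neg_one_le_oddRoot (n := n) hu]

theorem integral_inv_two_add_oddRoot_sq_pos (hn : n ≠ 0) :
    0 < ∫ u in (-(1/2) : ℝ)..(1/2), 1 / (2 + oddRoot n u) ^ 2 := by
  refine intervalIntegral.intervalIntegral_pos_of_pos_on
    (intervalIntegrable_inv_two_add_oddRoot_sq hn (by norm_num) (by norm_num)) (fun u hu => ?_)
    (by norm_num)
  have := neg_one_le_oddRoot (n := n) (x := u) (by linarith [hu.1])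
  have : 0 < 2 + oddRoot n u := by linarith
  positivity

theorem integral_inv_two_add_oddRoot_sq_le (hn : n ≠ 0) :
    ∫ u in (-(1/2) : ℝ)..(1/2), 1 / (2 + oddRoot n u) ^ 2 ≤ 5 / 8 := by
  have hint {a b : ℝ} (ha : -1 ≤ a) (hb : -1 ≤ b) :=
    intervalIntegrable_inv_two_add_oddRoot_sq hn ha hb
  rw [← intervalIntegral.integral_add_adjacent_intervals (b := 0) (hint (by norm_num) (by norm_num))
    (hint (by norm_num) (by norm_num))]
  have hneg : ∫ u in (-(1/2) : ℝ)..0, 1 / (2 + oddRoot n u) ^ 2 ≤ ∫ _ in (-(1/2) : ℝ)..0, 1 := by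
    refine intervalIntegral.integral_mono_on (by norm_num) (hint (by norm_num) (by norm_num))
      intervalIntegrable_const fun u hu => ?_
    have := neg_one_le_oddRoot (n := n) (x := u) (by linarith [hu.1])
    rw [div_le_one (by nlinarith)]
    nlinarith
  have hpos : ∫ u in (0 : ℝ)..(1/2), 1 / (2 + oddRoot n u) ^ 2 ≤ ∫ _ in (0 : ℝ)..(1/2), 1 / 4 := by
    refine intervalIntegral.integral_mono_on (by norm_num) (hint (by norm_num) (by norm_num))
      intervalIntegrable_const fun u hu => ?_
    have := oddRoot_nonneg (n := n) hu.1
    rw [div_le_div_iff₀ (by nlinarith) (by norm_num)]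
    nlinarith
  simp only [intervalIntegral.integral_const, smul_eq_mul] at hneg hpos
  linarith

theorem cseq_pow_three (hn : n ≠ 0) :
    cseq n ^ 3 = (1 / 2) * ∫ u in (-(1/2) : ℝ)..(1/2), 1 / (2 + oddRoot n u) ^ 2 := by
  rw [cseq, show ((3:ℝ)⁻¹) = (((3:ℕ):ℝ))⁻¹ by norm_num]
  exact Real.rpow_inv_natCast_pow (by linarith [integral_inv_two_add_oddRoot_sq_pos hn])
    (by norm_num)

theorem cseq_pos (hn : n ≠ 0) : 0 < cseq n :=
  Real.rpow_pos_of_pos (by linarith [integral_inv_two_add_oddRoot_sq_pos hn]) _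

theorem cseq_pow_three_le (hn : n ≠ 0) : cseq n ^ 3 ≤ 5 / 16 := by
  rw [cseq_pow_three hn]; linarith [integral_inv_two_add_oddRoot_sq_le hn]

end cseq

theorem abs_mul_sq_sub_four_sq_le {x : ℝ} (hx : |x| ≤ 1) : |x * (x ^ 2 - 4) ^ 2| ≤ 10 := by
  rw [abs_mul, abs_sq, ← sq_abs x]
  have h0 := abs_nonneg x
  nlinarith [sq_nonneg (|x| - 1), sq_nonneg (|x| ^ 2 - 1), mul_nonneg h0 (sub_nonneg.2 hx),
    mul_nonneg (mul_nonneg h0 h0) (sub_nonneg.2 hx)]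

theorem bseq_mul_cseq_pow_three_mul_ten_lt {n : ℕ} (hn : 21 ≤ n) :
    bseq n * cseq n ^ 3 * 10 < 1 := by
  have hn0 : n ≠ 0 := by omega
  have hn' : (21:ℝ) ≤ n := by exact_mod_cast hn
  have hb : bseq n ≤ (1 + 3 / 21) * (1 + 2 / 21) / 4 :=
    (bseq_le hn0).trans (by gcongr)
  calc bseq n * cseq n ^ 3 * 10 ≤ (1 + 3 / 21) * (1 + 2 / 21) / 4 * (5 / 16) * 10 := by
        gcongr
        · exact (pow_pos (cseq_pos hn0) 3).le
        · exact cseq_pow_three_le hn0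
    _ < 1 := by norm_num

theorem stmt_12 :
    ∃ n₀ : ℕ, Odd n₀ ∧ ∀ n : ℕ, n₀ ≤ n → Odd n →
      ∀ t ∈ Icc (0:ℝ) 1, ∀ u ∈ Icc (0:ℝ) 1, 0 < Kn n t u := by
  refine ⟨21, ⟨10, rfl⟩, fun n hn _ t ht u hu => ?_⟩
  have hn0 : n ≠ 0 := by omega
  have hroot {s : ℝ} (hs : s ∈ Icc (0:ℝ) 1) : |oddRoot n (s - 1/2)| ≤ 1 :=
    abs_oddRoot_le_one (abs_le.mpr ⟨by linarith [hs.1], by linarith [hs.2]⟩)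
  have hx := hroot hu
  have hy := hroot ht
  set x := oddRoot n (u - 1/2)
  set y := oddRoot n (t - 1/2)
  have hxy : |x * (x ^ 2 - 4) ^ 2 * y| ≤ 10 := by
    rw [abs_mul, ← mul_one 10]
    exact mul_le_mul (abs_mul_sq_sub_four_sq_le hx) hy (abs_nonneg y) (by norm_num)
  have hbc := bseq_mul_cseq_pow_three_mul_ten_lt hn
  have hbc0 : 0 ≤ bseq n * cseq n ^ 3 :=
    mul_nonneg (bseq_nonneg n) (pow_pos (cseq_pos hn0) 3).le
  rw [Kn, oddRoot_sq]
  refine div_pos ?_ (mul_pos (pow_pos (cseq_pos hn0) 2) (by nlinarith [abs_le.mp hx]))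
  nlinarith [mul_le_mul_of_nonneg_left ((le_abs_self _).trans hxy) hbc0]
end
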